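/- arXiv:1806.04753 — 2 statements merged into one kernel-verified Lean document; each statement's English description precedes it below -/
import Mathlib

section
/- The function Φ(κ, ν) = ν·(1 - (1 - 1/ν)^κ), viewed as a function of real ν ≥ 1 for fixed positive integer κ, is concave in ν. -/
/-!
Since `ν (1 - 1/ν)^κ = ν ((ν - 1)/ν)^κ`, this term is the perspective `(x, ν) ↦ ν f(x/ν)` of the
convex function `f y = y^κ`, evaluated along the affine line `ν ↦ (ν - 1, ν)`. The perspective of a
convex function is jointly convex, so this term is convex in `ν`, and
`ν (1 - (1 - 1/ν)^κ) = ν - ν (1 - 1/ν)^κ` is concave.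
-/

open Set

section Perspective

variable {E : Type*} [AddCommGroup E] [Module ℝ E]

noncomputable def perspective (f : E → ℝ) (p : E × ℝ) : ℝ := p.2 * f (p.2⁻¹ • p.1)

theorem inv_smul_add_eq_add_smul_inv_smul (x y : E) {ν μ : ℝ} (hν : ν ≠ 0) (hμ : μ ≠ 0)
    (a b : ℝ) :
    (a * ν + b * μ)⁻¹ • (a • x + b • y) =
      (a * ν / (a * ν + b * μ)) • (ν⁻¹ • x) + (b * μ / (a * ν + b * μ)) • (μ⁻¹ • y) := by
  simp only [smul_smul, smul_add]
  congr 2 <;> field_simp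

theorem ConvexOn.perspective {s : Set E} {f : E → ℝ} (hf : ConvexOn ℝ s f) :
    ConvexOn ℝ {p : E × ℝ | 0 < p.2 ∧ p.2⁻¹ • p.1 ∈ s} (perspective f) := by
  have weights : ∀ ⦃ν μ a b : ℝ⦄, 0 < ν → 0 < μ → 0 ≤ a → 0 ≤ b → a + b = 1 →
      0 < a * ν + b * μ ∧ 0 ≤ a * ν / (a * ν + b * μ) ∧ 0 ≤ b * μ / (a * ν + b * μ) ∧
        a * ν / (a * ν + b * μ) + b * μ / (a * ν + b * μ) = 1 := by
    intro ν μ a b hν hμ ha hb hab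
    have hw : 0 < a * ν + b * μ := by
      rcases ha.lt_or_eq with ha | rfl
      · positivity
      · simp_all
    exact ⟨hw, by positivity, by positivity, by field_simp⟩
  refine ⟨?_, ?_⟩
  · rintro ⟨x, ν⟩ ⟨hν : 0 < ν, hx : ν⁻¹ • x ∈ s⟩ ⟨y, μ⟩ ⟨hμ : 0 < μ, hy : μ⁻¹ • y ∈ s⟩
      a b ha hb hab
    obtain ⟨hw, hα, hβ, hαβ⟩ := weights hν hμ ha hb hab
    refine ⟨hw, ?_⟩
    simp only [Prod.smul_mk, Prod.mk_add_mk, smul_eq_mul]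
    rw [inv_smul_add_eq_add_smul_inv_smul x y hν.ne' hμ.ne']
    exact hf.1 hx hy hα hβ hαβ
  · rintro ⟨x, ν⟩ ⟨hν : 0 < ν, hx : ν⁻¹ • x ∈ s⟩ ⟨y, μ⟩ ⟨hμ : 0 < μ, hy : μ⁻¹ • y ∈ s⟩
      a b ha hb hab
    obtain ⟨hw, hα, hβ, hαβ⟩ := weights hν hμ ha hb hab
    set w := a * ν + b * μ
    simp only [_root_.perspective, Prod.smul_mk, Prod.mk_add_mk, smul_eq_mul]
    rw [inv_smul_add_eq_add_smul_inv_smul x y hν.ne' hμ.ne']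
    calc w * f ((a * ν / w) • (ν⁻¹ • x) + (b * μ / w) • (μ⁻¹ • y))
        ≤ w * ((a * ν / w) • f (ν⁻¹ • x) + (b * μ / w) • f (μ⁻¹ • y)) :=
          mul_le_mul_of_nonneg_left (hf.2 hx hy hα hβ hαβ) hw.le
      _ = a * (ν * f (ν⁻¹ • x)) + b * (μ * f (μ⁻¹ • y)) := by
          simp only [smul_eq_mul]
          field_simp

end Perspective

theorem convexOn_perspective_pow_sub_one (κ : ℕ) :
    ConvexOn ℝ (Ici 1) (fun ν : ℝ => perspective (· ^ κ) (ν - 1, ν)) := by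
  let line : ℝ →ᵃ[ℝ] ℝ × ℝ :=
    ⟨fun ν => (ν - 1, ν), LinearMap.id.prod LinearMap.id, fun _ _ => by simp [add_sub_assoc]⟩
  refine ((convexOn_pow κ).perspective.comp_affineMap line).subset ?_ (convex_Ici 1)
  intro ν (hν : 1 ≤ ν)
  have hν0 : 0 < ν := by linarith
  refine ⟨hν0, ?_⟩
  simp only [line, AffineMap.coe_mk, smul_eq_mul, mem_Ici]
  exact mul_nonneg (inv_nonneg.2 hν0.le) (by linarith)

theorem concaveOn_mul_one_sub_one_sub_inv_pow (κ : ℕ) :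
    ConcaveOn ℝ (Ici 1) (fun ν : ℝ => ν * (1 - (1 - 1 / ν) ^ κ)) := by
  refine ((concaveOn_id (convex_Ici 1)).sub (convexOn_perspective_pow_sub_one κ)).congr ?_
  intro ν (hν : 1 ≤ ν)
  have hν0 : ν ≠ 0 := by positivity
  simp only [perspective, Pi.sub_apply, id, smul_eq_mul]
  field_simp

theorem stmt_4_general (κ : ℕ) (ν₁ ν₂ t : ℝ)
    (h₁ : 1 ≤ ν₁) (h₂ : 1 ≤ ν₂) (ht : t ∈ Set.Icc (0:ℝ) 1) :
    t * (ν₁ * (1 - (1 - 1/ν₁) ^ κ)) + (1 - t) * (ν₂ * (1 - (1 - 1/ν₂) ^ κ))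
      ≤ (t * ν₁ + (1 - t) * ν₂) * (1 - (1 - 1/(t * ν₁ + (1 - t) * ν₂)) ^ κ) :=
  (concaveOn_mul_one_sub_one_sub_inv_pow κ).2 h₁ h₂ ht.1 (sub_nonneg.2 ht.2) (add_sub_cancel t 1)

/-- For fixed integer `κ ≥ 1`, `ν ↦ ν(1-(1-1/ν)^κ)` is concave on `ν ≥ 1`. -/
theorem stmt_4 (κ : ℕ) (hκ : 1 ≤ κ) (ν₁ ν₂ t : ℝ)
    (h₁ : 1 ≤ ν₁) (h₂ : 1 ≤ ν₂) (ht : t ∈ Set.Icc (0:ℝ) 1) :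
    t * (ν₁ * (1 - (1 - 1/ν₁) ^ κ)) + (1 - t) * (ν₂ * (1 - (1 - 1/ν₂) ^ κ))
      ≤ (t * ν₁ + (1 - t) * ν₂) * (1 - (1 - 1/(t * ν₁ + (1 - t) * ν₂)) ^ κ) :=
  stmt_4_general κ ν₁ ν₂ t h₁ h₂ ht
end

section
/- The expected number of distinct requests not covered by group representatives equals N(1 - (1-1/N)^K) - (N/G)(1 - (1-G/N)^K), and this quantity is nonnegative whenever 1 ≤ G ≤ N. -/
open Finset

/-- Both sides are `(1 - u) * (1 - v)` times a geometric sum, and `∑ v ^ i ≤ ∑ u ^ i`. -/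
lemma one_sub_pow_mul_one_sub_le {u v : ℝ} (hv : 0 ≤ v) (hvu : v ≤ u) (hu : u ≤ 1) (K : ℕ) :
    (1 - v ^ K) * (1 - u) ≤ (1 - u ^ K) * (1 - v) := by
  rw [← geom_sum_mul_neg v K, ← geom_sum_mul_neg u K]
  have hsum : ∑ i ∈ range K, v ^ i ≤ ∑ i ∈ range K, u ^ i :=
    sum_le_sum fun i _ => pow_le_pow_left₀ hv hvu i
  have hprod : 0 ≤ (1 - v) * (1 - u) := mul_nonneg (by linarith) (by linarith)
  calc (∑ i ∈ range K, v ^ i) * (1 - v) * (1 - u)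
      = (∑ i ∈ range K, v ^ i) * ((1 - v) * (1 - u)) := by ring
    _ ≤ (∑ i ∈ range K, u ^ i) * ((1 - v) * (1 - u)) := by gcongr
    _ = (∑ i ∈ range K, u ^ i) * (1 - u) * (1 - v) := by ring

theorem stmt_7_general (N K G : ℕ) (hG : 1 ≤ G) (hGN : G ≤ N) :
    ((N : ℝ)/(G : ℝ)) * (1 - (1 - (G : ℝ)/(N : ℝ)) ^ K)
      ≤ (N : ℝ) * (1 - (1 - 1/(N : ℝ)) ^ K) := by
  have hG' : (1 : ℝ) ≤ G := by exact_mod_cast hG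
  have hGN' : (G : ℝ) ≤ N := by exact_mod_cast hGN
  have hN : (0 : ℝ) < N := by linarith
  have key := one_sub_pow_mul_one_sub_le (u := 1 - 1 / (N : ℝ)) (v := 1 - G / N)
    (by rw [sub_nonneg, div_le_one hN]; exact hGN')
    (by gcongr) (by simp [hN.le]) K
  rw [sub_sub_cancel, sub_sub_cancel] at key
  rw [div_mul_eq_mul_div, div_le_iff₀ (by linarith)]
  have hscale : (0 : ℝ) ≤ N ^ 2 := by positivity
  calc (N : ℝ) * (1 - (1 - G / N) ^ K) = N ^ 2 * ((1 - (1 - G / N) ^ K) * (1 / N)) := by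
        field_simp
    _ ≤ N ^ 2 * ((1 - (1 - 1 / N) ^ K) * (G / N)) := by gcongr
    _ = N * (1 - (1 - 1 / N) ^ K) * G := by field_simp

/-- The expected number of distinct requests not covered by group representatives
is nonnegative: `N(1-(1-1/N)^K) ≥ (N/G)(1-(1-G/N)^K)` when `1 ≤ G ≤ N` and `G ∣ N`. -/
theorem stmt_7 (N K G : ℕ) (hK : 1 ≤ K) (hG : 1 ≤ G) (hGN : G ≤ N) (hdvd : G ∣ N) :
    ((N : ℝ)/(G : ℝ)) * (1 - (1 - (G : ℝ)/(N : ℝ)) ^ K)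
      ≤ (N : ℝ) * (1 - (1 - 1/(N : ℝ)) ^ K) :=
  stmt_7_general N K G hG hGN
end
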